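/- arXiv:1610.09571 — 3 statements merged into one kernel-verified Lean document; each statement's English description precedes it below -/
import Mathlib

section
/- Let A : ℝ → Matrix (Fin n) (Fin n) ℂ be continuous with ‖(A(t)+A(t)ᴴ)/2‖ ≤ α for all t (Frobenius norm), and let F : ℝ → Matrix (Fin n) (Fin n) ℂ be continuous with ‖F(t)‖ ≤ M for all t. If U solves U'(t) + A(t) * U(t) = F(t) with U(0) = 0, then for all t ∈ [0, τ] with τ > 0 and α > 0: ‖U(t)‖ ≤ M * (exp(α τ) - 1)/α; and if α = 0 then ‖U(t)‖ ≤ M τ. -/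
/-!
The energy `‖U‖²` (Frobenius norm) has derivative `2 Re tr(Uᴴ F) - 2 Re tr(Uᴴ A U)`. Only the
Hermitian part `(A + Aᴴ)/2` contributes to `Re tr(Uᴴ A U)`, so Cauchy–Schwarz gives
`(‖U‖²)' ≤ 2 ‖U‖ (α ‖U‖ + M)`, formally `‖U‖' ≤ α ‖U‖ + M`. Grönwall's inequality with `U 0 = 0`
then bounds `‖U t‖` by `M (exp (α t) - 1) / α` (by `M t` if `α = 0`), which increases with `t`.
-/

open Matrix

open scoped BigOperators

noncomputable def frobNorm {n : ℕ} (M : Matrix (Fin n) (Fin n) ℂ) : ℝ :=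
  Real.sqrt (∑ i, ∑ j, ‖M i j‖ ^ 2)

open Set Filter Topology

theorem le_gronwallBound_of_sq_deriv_right_le {N g' : ℝ → ℝ} {δ K ε a b : ℝ}
    (hK : 0 ≤ K) (hε : 0 ≤ ε) (hN : ∀ x ∈ Icc a b, 0 ≤ N x)
    (hcont : ContinuousOn (fun x => N x ^ 2) (Icc a b))
    (hderiv : ∀ x ∈ Ico a b, HasDerivWithinAt (fun y => N y ^ 2) (g' x) (Ici x) x)
    (ha : N a ≤ δ) (bound : ∀ x ∈ Ico a b, g' x ≤ 2 * N x * (K * N x + ε)) :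
    ∀ x ∈ Icc a b, N x ≤ gronwallBound δ K ε (x - a) := by
  intro x hx
  -- `N` itself need not be differentiable where it vanishes, so we work with `√(N² + η²)`.
  have H : ∀ η > 0, N x ≤ gronwallBound (δ + η) K ε (x - a) := by
    intro η hη
    set h := fun y => √(N y ^ 2 + η ^ 2)
    have hpos : ∀ y, 0 < N y ^ 2 + η ^ 2 := fun y => by positivity
    have hN_le : ∀ y ∈ Icc a b, N y ≤ h y := fun y hy => by
      rw [← Real.sqrt_sq (hN y hy)]
      exact Real.sqrt_le_sqrt (by linarith [sq_nonneg η])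
    have hh : ContinuousOn h (Icc a b) := (hcont.add continuousOn_const).sqrt
    have hh' : ∀ y ∈ Ico a b, HasDerivWithinAt h (g' y / (2 * h y)) (Ici y) y := fun y hy =>
      ((hderiv y hy).add_const _).sqrt (hpos y).ne'
    have hha : h a ≤ δ + η := by
      have hNa := hN a (left_mem_Icc.2 (hx.1.trans hx.2))
      calc h a ≤ √((δ + η) ^ 2) := Real.sqrt_le_sqrt (by nlinarith)
        _ = δ + η := Real.sqrt_sq (by linarith)
    have hbound : ∀ y ∈ Ico a b, g' y / (2 * h y) ≤ K * h y + ε := by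
      intro y hy
      have hNy := hN y (Ico_subset_Icc_self hy)
      have hNh := hN_le y (Ico_subset_Icc_self hy)
      rw [div_le_iff₀ (by positivity)]
      calc g' y ≤ 2 * N y * (K * N y + ε) := bound y hy
        _ ≤ 2 * h y * (K * h y + ε) := by gcongr
        _ = (K * h y + ε) * (2 * h y) := by ring
    calc N x ≤ h x := hN_le x hx
      _ ≤ gronwallBound (δ + η) K ε (x - a) :=
        le_gronwallBound_of_liminf_deriv_right_le hh
          (fun y hy _ hr => (hh' y hy).liminf_right_slope_le hr) hha hbound x hx
  have hlim : Tendsto (fun η => gronwallBound (δ + η) K ε (x - a)) (𝓝[>] 0)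
      (𝓝 (gronwallBound δ K ε (x - a))) := by
    have hcont : Continuous fun η => gronwallBound (δ + η) K ε (x - a) := by
      unfold gronwallBound; split_ifs <;> fun_prop
    simpa using (hcont.tendsto 0).mono_left nhdsWithin_le_nhds
  exact ge_of_tendsto hlim (eventually_nhdsWithin_of_forall H)

attribute [local instance] Matrix.frobeniusNormedAddCommGroup

namespace Matrix

variable {m n : Type*} [Fintype m] [Fintype n]

def frobeniusInner (X Y : Matrix m n ℂ) : ℝ := (trace (Xᴴ * Y)).re

theorem frobeniusInner_eq_sum (X Y : Matrix m n ℂ) :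
    frobeniusInner X Y = ∑ i, ∑ j, inner ℝ (X i j) (Y i j) := by
  simp only [frobeniusInner, trace, diag_apply, mul_apply, conjTranspose_apply, Complex.re_sum,
    Complex.inner, mul_comm (star _)]
  exact Finset.sum_comm

theorem frobenius_norm_sq_eq_sum (X : Matrix m n ℂ) : ‖X‖ ^ 2 = ∑ i, ∑ j, ‖X i j‖ ^ 2 := by
  rw [frobenius_norm_def, ← Real.rpow_natCast, ← Real.rpow_mul (by positivity)]
  norm_num

theorem frobeniusInner_le_norm_mul_norm (X Y : Matrix m n ℂ) :
    frobeniusInner X Y ≤ ‖X‖ * ‖Y‖ := by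
  rw [frobeniusInner_eq_sum]
  calc ∑ i, ∑ j, inner ℝ (X i j) (Y i j)
      ≤ ∑ p : m × n, ‖X p.1 p.2‖ * ‖Y p.1 p.2‖ := by
        rw [Fintype.sum_prod_type]; gcongr; exact real_inner_le_norm _ _
    _ ≤ √(∑ p : m × n, ‖X p.1 p.2‖ ^ 2) * √(∑ p : m × n, ‖Y p.1 p.2‖ ^ 2) :=
        Real.sum_mul_le_sqrt_mul_sqrt _ _ _
    _ = ‖X‖ * ‖Y‖ := by
        simp only [Fintype.sum_prod_type, ← frobenius_norm_sq_eq_sum, Real.sqrt_sq (norm_nonneg _)]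

theorem frobeniusInner_sub_right (X Y Z : Matrix m n ℂ) :
    frobeniusInner X (Y - Z) = frobeniusInner X Y - frobeniusInner X Z := by
  simp [frobeniusInner, Matrix.mul_sub]

theorem frobeniusInner_neg_right (X Y : Matrix m n ℂ) :
    frobeniusInner X (-Y) = -frobeniusInner X Y := by
  simp [frobeniusInner]

theorem frobeniusInner_conjTranspose_mul (A : Matrix m m ℂ) (X : Matrix m n ℂ) :
    frobeniusInner X (Aᴴ * X) = frobeniusInner X (A * X) := by
  rw [frobeniusInner, frobeniusInner, ← Matrix.mul_assoc, ← conjTranspose_mul,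
    ← conjTranspose_conjTranspose X, ← conjTranspose_mul, trace_conjTranspose,
    conjTranspose_conjTranspose]
  exact Complex.conj_re _

theorem frobeniusInner_hermitianPart_mul (A : Matrix m m ℂ) (X : Matrix m n ℂ) :
    frobeniusInner X (((1 : ℂ) / 2) • (A + Aᴴ) * X) = frobeniusInner X (A * X) := by
  have h := frobeniusInner_conjTranspose_mul A X
  rw [frobeniusInner, frobeniusInner] at h
  rw [frobeniusInner, frobeniusInner, Matrix.smul_mul, Matrix.mul_smul, Matrix.add_mul,
    Matrix.mul_add, trace_smul, trace_add, smul_eq_mul]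
  norm_num [Complex.mul_re, h]
  ring

theorem neg_mul_sq_le_frobeniusInner_mul (A : Matrix m m ℂ) (X : Matrix m n ℂ) :
    -(‖((1 : ℂ) / 2) • (A + Aᴴ)‖ * ‖X‖ ^ 2) ≤ frobeniusInner X (A * X) := by
  rw [← frobeniusInner_hermitianPart_mul, neg_le, ← frobeniusInner_neg_right, ← Matrix.neg_mul]
  calc frobeniusInner X (-(((1 : ℂ) / 2) • (A + Aᴴ)) * X)
      ≤ ‖X‖ * ‖-(((1 : ℂ) / 2) • (A + Aᴴ)) * X‖ := frobeniusInner_le_norm_mul_norm _ _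
    _ ≤ ‖X‖ * (‖((1 : ℂ) / 2) • (A + Aᴴ)‖ * ‖X‖) := by
        grw [frobenius_norm_mul, norm_neg]
    _ = ‖((1 : ℂ) / 2) • (A + Aᴴ)‖ * ‖X‖ ^ 2 := by ring

theorem hasDerivAt_frobenius_norm_sq {U : ℝ → Matrix m n ℂ} {U' : Matrix m n ℂ} {t : ℝ}
    (hU : ∀ i j, HasDerivAt (fun s => U s i j) (U' i j) t) :
    HasDerivAt (fun s => ‖U s‖ ^ 2) (2 * frobeniusInner (U t) U') t := by
  simp only [frobenius_norm_sq_eq_sum, frobeniusInner_eq_sum, Finset.mul_sum]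
  exact HasDerivAt.fun_sum fun i _ => HasDerivAt.fun_sum fun j _ => (hU i j).norm_sq

end Matrix

theorem frobNorm_eq_norm {n : ℕ} (X : Matrix (Fin n) (Fin n) ℂ) : frobNorm X = ‖X‖ := by
  rw [frobNorm, ← Matrix.frobenius_norm_sq_eq_sum, Real.sqrt_sq (norm_nonneg _)]

theorem stmt2_general (n : ℕ) (A F U : ℝ → Matrix (Fin n) (Fin n) ℂ) (α M τ : ℝ)
    (hα : 0 ≤ α)
    (hAbound : ∀ t, frobNorm (((1 : ℂ) / 2) • (A t + (A t)ᴴ)) ≤ α)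
    (hFbound : ∀ t, frobNorm (F t) ≤ M)
    (hU : ∀ t i j, HasDerivAt (fun s => U s i j) ((F t - A t * U t) i j) t)
    (hU0 : U 0 = 0) :
    ∀ t ∈ Set.Icc (0 : ℝ) τ,
      (0 < α → frobNorm (U t) ≤ M * (Real.exp (α * τ) - 1) / α) ∧
      (α = 0 → frobNorm (U t) ≤ M * τ) := by
  simp only [frobNorm_eq_norm] at hAbound hFbound ⊢
  intro t ht
  have hM : 0 ≤ M := (norm_nonneg _).trans (hFbound 0)
  have hderiv : ∀ s, HasDerivAt (fun s => ‖U s‖ ^ 2)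
      (2 * frobeniusInner (U s) (F s - A s * U s)) s := fun s =>
    hasDerivAt_frobenius_norm_sq (hU s)
  have henergy : ∀ s, 2 * frobeniusInner (U s) (F s - A s * U s)
      ≤ 2 * ‖U s‖ * (α * ‖U s‖ + M) := fun s => by
    have hF : frobeniusInner (U s) (F s) ≤ ‖U s‖ * M :=
      (frobeniusInner_le_norm_mul_norm _ _).trans (by grw [hFbound s])
    have hA : -(α * ‖U s‖ ^ 2) ≤ frobeniusInner (U s) (A s * U s) :=
      (neg_mul_sq_le_frobeniusInner_mul _ _).trans' (by grw [hAbound s])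
    rw [frobeniusInner_sub_right]
    linarith
  have hbound := (le_gronwallBound_of_sq_deriv_right_le hα hM (fun _ _ => norm_nonneg _)
    (HasDerivAt.continuousOn fun s _ => hderiv s) (fun s _ => (hderiv s).hasDerivWithinAt)
    (by simp [hU0]) (fun s _ => henergy s) t ht).trans
    (gronwallBound_mono le_rfl hM hα (sub_le_sub_right ht.2 0))
  refine ⟨fun hα_pos => hbound.trans_eq ?_, fun hα_zero => hbound.trans_eq ?_⟩
  · simp only [gronwallBound_of_K_ne_0 hα_pos.ne', sub_zero]
    ring
  · simp only [hα_zero, gronwallBound_K0, sub_zero, zero_add]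

/-- A priori estimate for the inhomogeneous linear matrix ODE `U' + A U = F`, `U 0 = 0`. -/
theorem stmt2 (n : ℕ) (A F U : ℝ → Matrix (Fin n) (Fin n) ℂ) (α M τ : ℝ)
    (hA : Continuous A) (hF : Continuous F)
    (hα : 0 ≤ α) (hτ : 0 < τ)
    (hAbound : ∀ t, frobNorm (((1 : ℂ) / 2) • (A t + (A t)ᴴ)) ≤ α)
    (hFbound : ∀ t, frobNorm (F t) ≤ M)
    (hU : ∀ t i j, HasDerivAt (fun s => U s i j) ((F t - A t * U t) i j) t)
    (hU0 : U 0 = 0) :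
    ∀ t ∈ Set.Icc (0 : ℝ) τ,
      (0 < α → frobNorm (U t) ≤ M * (Real.exp (α * τ) - 1) / α) ∧
      (α = 0 → frobNorm (U t) ≤ M * τ) :=
  stmt2_general n A F U α M τ hα hAbound hFbound hU hU0
end

section
/- Let κ⁺ : ℝ → ℝ be continuous nonnegative, τ > 0, and suppose k⁺ := ∫₀^τ u κ⁺(u) du < 1. Let b : ℝ → ℝ solve b'' + κ⁺(t) b = 0 with b(0) = 0, b'(0) = 1. Then for all t ∈ (0, τ], b(t)/t ≥ 1 - k⁺. In particular b(t) > 0 for t ∈ (0, τ]. -/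
open Set intervalIntegral MeasureTheory Filter Topology

/-- Lower bound `b(t)/t ≥ 1 - k⁺` for the Jacobi field under the smallness condition
`k⁺ = ∫₀^τ u κ⁺(u) du < 1`; in particular `b > 0` on `(0, τ]`. -/
theorem stmt6 (κp : ℝ → ℝ) (τ : ℝ) (b db : ℝ → ℝ)
    (hκcont : Continuous κp) (hκpos : ∀ t, 0 ≤ κp t)
    (hτ : 0 < τ)
    (hk : (∫ u in (0 : ℝ)..τ, u * κp u) < 1)
    (hb : ∀ t, HasDerivAt b (db t) t)
    (hdb : ∀ t, HasDerivAt db (-(κp t * b t)) t)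
    (hb0 : b 0 = 0) (hdb0 : db 0 = 1) :
    ∀ t ∈ Set.Ioc (0 : ℝ) τ,
      1 - (∫ u in (0 : ℝ)..τ, u * κp u) ≤ b t / t ∧ 0 < b t := by
  set k : ℝ := ∫ u in (0 : ℝ)..τ, u * κp u with hkdef
  have hbd : Differentiable ℝ b := fun t => (hb t).differentiableAt
  have hdbd : Differentiable ℝ db := fun t => (hdb t).differentiableAt
  have hbc : Continuous b := hbd.continuous
  have hdbc : Continuous db := hdbd.continuous
  have hκbc : Continuous fun u => κp u * b u := hκcont.mul hbc
  have huκc : Continuous fun u : ℝ => u * κp u := continuous_id.mul hκcont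
  -- FTC for b
  have FTCb : ∀ x s : ℝ, (∫ u in x..s, db u) = b s - b x := fun x s =>
    integral_eq_sub_of_hasDerivAt (fun u _ => hb u) (hdbc.intervalIntegrable x s)
  -- FTC for db
  have FTCdb : ∀ s : ℝ, db s = 1 - ∫ u in (0 : ℝ)..s, κp u * b u := by
    intro s
    have h1 : (∫ u in (0 : ℝ)..s, -(κp u * b u)) = db s - db 0 :=
      integral_eq_sub_of_hasDerivAt (fun u _ => hdb u) ((hκbc.neg).intervalIntegrable 0 s)
    rw [intervalIntegral.integral_neg] at h1
    rw [hdb0] at h1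
    linarith
  -- key lemma: if b ≥ 0 on [0,t] (t ≤ τ), then db ≥ 1 - k on [0,t]
  have key : ∀ t ∈ Icc (0 : ℝ) τ, (∀ s ∈ Icc (0 : ℝ) t, 0 ≤ b s) →
      ∀ s ∈ Icc (0 : ℝ) t, 1 - k ≤ db s := by
    intro t ht hpos s hs
    -- b u ≤ u on [0,t]
    have hble : ∀ u ∈ Icc (0 : ℝ) t, b u ≤ u := by
      intro u hu
      have hdble : ∀ w ∈ Icc (0 : ℝ) u, db w ≤ 1 := by
        intro w hw
        have hnn : (0 : ℝ) ≤ ∫ v in (0 : ℝ)..w, κp v * b v := by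
          apply intervalIntegral.integral_nonneg hw.1
          intro v hv
          exact mul_nonneg (hκpos v) (hpos v ⟨hv.1, hv.2.trans (hw.2.trans hu.2)⟩)
        rw [FTCdb w]; linarith
      have : (∫ w in (0 : ℝ)..u, db w) ≤ ∫ w in (0 : ℝ)..u, (1 : ℝ) := by
        apply intervalIntegral.integral_mono_on hu.1
          (hdbc.intervalIntegrable 0 u) (intervalIntegrable_const)
        exact hdble
      rw [FTCb 0 u, hb0] at this
      simpa using this
    -- db s = 1 - ∫₀ˢ κ b ≥ 1 - ∫₀ˢ u κ u ≥ 1 - k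
    have h1 : (∫ u in (0 : ℝ)..s, κp u * b u) ≤ ∫ u in (0 : ℝ)..s, u * κp u := by
      apply intervalIntegral.integral_mono_on hs.1
        (hκbc.intervalIntegrable 0 s) (huκc.intervalIntegrable 0 s)
      intro u hu
      calc κp u * b u ≤ κp u * u :=
            mul_le_mul_of_nonneg_left (hble u ⟨hu.1, hu.2.trans hs.2⟩) (hκpos u)
        _ = u * κp u := mul_comm _ _
    have h2 : (∫ u in (0 : ℝ)..s, u * κp u) ≤ k := by
      apply intervalIntegral.integral_mono_interval le_rfl hs.1 (hs.2.trans ht.2)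
        ?_ (huκc.intervalIntegrable 0 τ)
      filter_upwards [ae_restrict_mem measurableSet_Ioc] with u hu
      exact mul_nonneg hu.1.le (hκpos u)
    rw [FTCdb s]; linarith
  -- the sup argument
  set S : Set ℝ := {x | x ∈ Icc (0 : ℝ) τ ∧ ∀ s ∈ Icc (0 : ℝ) x, 0 ≤ b s} with hSdef
  have h0S : (0 : ℝ) ∈ S := by
    refine ⟨⟨le_rfl, hτ.le⟩, fun s hs => ?_⟩
    have : s = 0 := le_antisymm hs.2 hs.1
    rw [this, hb0]
  have hSbdd : BddAbove S := ⟨τ, fun x hx => hx.1.2⟩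
  set T : ℝ := sSup S with hTdef
  have hT0 : 0 ≤ T := le_csSup hSbdd h0S
  have hTτ : T ≤ τ := csSup_le ⟨0, h0S⟩ fun x hx => hx.1.2
  have hTS : ∀ s ∈ Icc (0 : ℝ) T, 0 ≤ b s := by
    intro s hs
    rcases lt_or_eq_of_le hs.2 with hlt | heq
    · obtain ⟨x, hxS, hsx⟩ := exists_lt_of_lt_csSup ⟨0, h0S⟩ hlt
      exact hxS.2 s ⟨hs.1, hsx.le⟩
    · rcases eq_or_lt_of_le hs.1 with h0 | h0
    -- here s = T; if T = 0, b 0 = 0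
      · rw [← h0, hb0]
      · -- T > 0 : b T is limit of b s for s < T, all ≥ 0
        refine ge_of_tendsto (x := 𝓝[<] s)
          ((hbc.tendsto s).mono_left nhdsWithin_le_nhds) ?_
        filter_upwards [Ioo_mem_nhdsLT_of_mem (⟨h0, le_rfl⟩ : s ∈ Ioc 0 s)] with w hw
        obtain ⟨x, hxS, hwx⟩ := exists_lt_of_lt_csSup ⟨0, h0S⟩ (heq ▸ hw.2)
        exact hxS.2 w ⟨hw.1.le, hwx.le⟩
  have hdbT : ∀ s ∈ Icc (0 : ℝ) T, 1 - k ≤ db s := key T ⟨hT0, hTτ⟩ hTS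
  -- T = τ
  have hTeq : T = τ := by
    by_contra hne
    have hTlt : T < τ := lt_of_le_of_ne hTτ hne
    have hdbTpos : 0 < db T := lt_of_lt_of_le (by linarith) (hdbT T ⟨hT0, le_rfl⟩)
    have hopen : IsOpen {u : ℝ | 0 < db u} := isOpen_lt continuous_const hdbc
    obtain ⟨δ, hδ, hball⟩ := Metric.isOpen_iff.1 hopen T hdbTpos
    set T' : ℝ := min τ (T + δ / 2) with hT'def
    have hTT' : T < T' := lt_min hTlt (by linarith)
    have hdbnn : ∀ u ∈ Icc T T', 0 ≤ db u := by
      intro u hu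
      have : dist u T < δ := by
        rw [Real.dist_eq, abs_lt]
        constructor
        · linarith [hu.1]
        · have := hu.2.trans (min_le_right _ _)
          linarith
      exact (hball this).le
    have hT'S : T' ∈ S := by
      refine ⟨⟨hT0.trans hTT'.le, min_le_left _ _⟩, fun s hs => ?_⟩
      rcases le_or_gt s T with h | h
      · exact hTS s ⟨hs.1, h⟩
      · have : (0 : ℝ) ≤ ∫ u in T..s, db u := by
          apply intervalIntegral.integral_nonneg h.le
          intro u hu
          exact hdbnn u ⟨hu.1, hu.2.trans hs.2⟩
        rw [FTCb T s] at this
        have hbT : 0 ≤ b T := hTS T ⟨hT0, le_rfl⟩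
        linarith
    exact absurd (le_csSup hSbdd hT'S) (not_le.2 hTT')
  -- conclude
  intro t ht
  have htIcc : t ∈ Icc (0 : ℝ) τ := ⟨ht.1.le, ht.2⟩
  have hdball : ∀ s ∈ Icc (0 : ℝ) t, 1 - k ≤ db s := by
    intro s hs
    exact hdbT s ⟨hs.1, by rw [hTeq]; exact hs.2.trans ht.2⟩
  have hint : (∫ u in (0 : ℝ)..t, (1 - k : ℝ)) ≤ ∫ u in (0 : ℝ)..t, db u := by
    apply intervalIntegral.integral_mono_on ht.1.le intervalIntegrable_const
      (hdbc.intervalIntegrable 0 t)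
    exact hdball
  rw [FTCb 0 t, hb0, intervalIntegral.integral_const] at hint
  simp only [sub_zero, smul_eq_mul] at hint
  have hbt : (1 - k) * t ≤ b t := by linarith
  have hpos : 0 < b t := lt_of_lt_of_le (by nlinarith [ht.1]) hbt
  refine ⟨?_, hpos⟩
  rw [le_div_iff₀ ht.1]
  linarith [hbt]
end

section
/- Let κ⁻ : ℝ → ℝ be continuous nonnegative, τ > 0, and let b : ℝ → ℝ solve b'' - κ⁻(t) b = 0 with b(0) = 0, b'(0) = 1. Then for all t ∈ (0, τ], b(t)/t ≤ exp(∫₀^τ u κ⁻(u) du). -/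
/-!
On `[0, ∞)` the solution satisfies `b ≥ 0`, `b' ≥ 1` and `b ≤ t b'`: the energies `b b'` and
`b'²` are nondecreasing there, and `b'` cannot jump from `1` to `≤ -1`. Hence
`b'' = κ b ≤ t κ b'`, and Grönwall's inequality gives `b' ≤ exp (∫₀ᵗ u κ u)`, so
`b t / t ≤ b' t ≤ exp (∫₀^τ u κ u)`.
-/

open Set Real MeasureTheory

lemma le_of_hasDerivAt_nonneg_of_lt {f f' : ℝ → ℝ} {a t : ℝ}
    (hf : ∀ x, HasDerivAt f (f' x) x) (hf' : ∀ x, a < x → 0 ≤ f' x) (hat : a ≤ t) :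
    f a ≤ f t :=
  monotoneOn_of_hasDerivWithinAt_nonneg (convex_Ici a)
    (fun x _ => (hf x).continuousAt.continuousWithinAt) (fun x _ => (hf x).hasDerivWithinAt)
    (fun x hx => hf' x (by simpa using hx)) self_mem_Ici hat hat

lemma le_mul_exp_integral_of_hasDerivAt_le {f f' g : ℝ → ℝ} {a t : ℝ}
    (hf : ∀ x, HasDerivAt f (f' x) x) (hg : Continuous g)
    (hf' : ∀ x, a < x → f' x ≤ g x * f x) (hat : a ≤ t) :
    f t ≤ f a * exp (∫ x in a..t, g x) := by
  set G : ℝ → ℝ := fun s => ∫ x in a..s, g x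
  have hG : ∀ x, HasDerivAt (fun s => -(f s * exp (-G s)))
      (-(f' x * exp (-G x) + f x * (exp (-G x) * -g x))) x := fun x =>
    ((hf x).mul ((hg.integral_hasStrictDerivAt a x).hasDerivAt.neg.exp)).neg
  have hdecay : f t * exp (-G t) ≤ f a := by
    have h := le_of_hasDerivAt_nonneg_of_lt hG (fun x hx => ?_) hat
    · simpa [G] using h
    · nlinarith [hf' x hx, exp_pos (-G x)]
  calc f t = f t * exp (-G t) * exp (G t) := by rw [mul_assoc, ← exp_add]; simp
    _ ≤ f a * exp (G t) := by gcongr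

lemma one_le_of_one_le_sq {f : ℝ → ℝ} {a t : ℝ} (hf : ContinuousOn f (Icc a t))
    (hsq : ∀ s ∈ Icc a t, 1 ≤ f s ^ 2) (ha : 0 ≤ f a) (hat : a ≤ t) : 1 ≤ f t := by
  by_contra! h
  have hneg : f t < 0 := by nlinarith [hsq t ⟨hat, le_rfl⟩]
  obtain ⟨c, hc, hfc⟩ := intermediate_value_Icc' hat hf ⟨hneg.le, ha⟩
  have h1 := hsq c hc
  norm_num [hfc] at h1

namespace SturmComparison

variable {κ b b' : ℝ → ℝ} {t : ℝ}

lemma mul_deriv_nonneg (hb : ∀ t, HasDerivAt b (b' t) t)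
    (hb' : ∀ t, HasDerivAt b' (κ t * b t) t) (hκ : ∀ t, 0 ≤ κ t) (hb0 : b 0 = 0)
    (ht : 0 ≤ t) : 0 ≤ b t * b' t := by
  have hderiv : ∀ x, HasDerivAt (fun s => b s * b' s) (b' x ^ 2 + κ x * b x ^ 2) x := fun x =>
    ((hb x).mul (hb' x)).congr_deriv (by ring)
  simpa [hb0] using
    le_of_hasDerivAt_nonneg_of_lt hderiv (fun x _ => by have := hκ x; positivity) ht

lemma one_le_deriv (hb : ∀ t, HasDerivAt b (b' t) t)
    (hb' : ∀ t, HasDerivAt b' (κ t * b t) t) (hκ : ∀ t, 0 ≤ κ t) (hb0 : b 0 = 0)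
    (hb'0 : b' 0 = 1) (ht : 0 ≤ t) : 1 ≤ b' t := by
  have hderiv : ∀ x, HasDerivAt (fun s => b' s ^ 2) (2 * κ x * (b x * b' x)) x := fun x =>
    ((hb' x).pow 2).congr_deriv (by ring)
  have hsq : ∀ s ∈ Icc 0 t, 1 ≤ b' s ^ 2 := fun s hs => by
    have h := le_of_hasDerivAt_nonneg_of_lt hderiv (fun x hx => ?_) hs.1
    · simpa [hb'0] using h
    · have := mul_deriv_nonneg hb hb' hκ hb0 hx.le
      have := hκ x
      positivity
  exact one_le_of_one_le_sq (fun x _ => (hb' x).continuousAt.continuousWithinAt) hsq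
    (by rw [hb'0]; exact zero_le_one) ht

lemma nonneg (hb : ∀ t, HasDerivAt b (b' t) t)
    (hb' : ∀ t, HasDerivAt b' (κ t * b t) t) (hκ : ∀ t, 0 ≤ κ t) (hb0 : b 0 = 0)
    (hb'0 : b' 0 = 1) (ht : 0 ≤ t) : 0 ≤ b t := by
  simpa [hb0] using le_of_hasDerivAt_nonneg_of_lt hb
    (fun x hx => zero_le_one.trans (one_le_deriv hb hb' hκ hb0 hb'0 hx.le)) ht

lemma le_mul_deriv (hb : ∀ t, HasDerivAt b (b' t) t)
    (hb' : ∀ t, HasDerivAt b' (κ t * b t) t) (hκ : ∀ t, 0 ≤ κ t) (hb0 : b 0 = 0)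
    (hb'0 : b' 0 = 1) (ht : 0 ≤ t) : b t ≤ t * b' t := by
  have hderiv : ∀ x, HasDerivAt (fun s => s * b' s - b s) (x * (κ x * b x)) x := fun x =>
    (((hasDerivAt_id x).mul (hb' x)).sub (hb x)).congr_deriv (by simp)
  have h := le_of_hasDerivAt_nonneg_of_lt hderiv (fun x hx => ?_) ht
  · simp only [zero_mul, hb0, sub_zero] at h
    linarith
  · have := nonneg hb hb' hκ hb0 hb'0 hx.le
    have := hκ x
    positivity

lemma deriv_le_exp_integral (hκc : Continuous κ) (hb : ∀ t, HasDerivAt b (b' t) t)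
    (hb' : ∀ t, HasDerivAt b' (κ t * b t) t) (hκ : ∀ t, 0 ≤ κ t) (hb0 : b 0 = 0)
    (hb'0 : b' 0 = 1) (ht : 0 ≤ t) : b' t ≤ exp (∫ u in (0 : ℝ)..t, u * κ u) := by
  simpa [hb'0] using le_mul_exp_integral_of_hasDerivAt_le hb' (continuous_id.mul hκc)
    (fun x hx => by
      have := mul_le_mul_of_nonneg_left (le_mul_deriv hb hb' hκ hb0 hb'0 hx.le) (hκ x)
      simpa [mul_assoc, mul_left_comm] using this) ht

end SturmComparison

theorem stmt7_general (κm : ℝ → ℝ) (τ : ℝ) (b db : ℝ → ℝ)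
    (hκcont : Continuous κm) (hκpos : ∀ t, 0 ≤ κm t)
    (hb : ∀ t, HasDerivAt b (db t) t)
    (hdb : ∀ t, HasDerivAt db (κm t * b t) t)
    (hb0 : b 0 = 0) (hdb0 : db 0 = 1) :
    ∀ t ∈ Set.Ioc (0 : ℝ) τ,
      b t / t ≤ Real.exp (∫ u in (0 : ℝ)..τ, u * κm u) := by
  rintro t ⟨ht0, htτ⟩
  have hcont : Continuous fun u => u * κm u := continuous_id.mul hκcont
  have hmono : ∫ u in (0 : ℝ)..t, u * κm u ≤ ∫ u in (0 : ℝ)..τ, u * κm u :=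
    intervalIntegral.integral_mono_interval le_rfl ht0.le htτ
      ((ae_restrict_iff' measurableSet_Ioc).mpr <| ae_of_all _ fun u hu =>
        mul_nonneg hu.1.le (hκpos u))
      (hcont.intervalIntegrable 0 τ)
  calc b t / t ≤ db t := by
        rw [div_le_iff₀ ht0, mul_comm]
        exact SturmComparison.le_mul_deriv hb hdb hκpos hb0 hdb0 ht0.le
    _ ≤ exp (∫ u in (0 : ℝ)..t, u * κm u) :=
        SturmComparison.deriv_le_exp_integral hκcont hb hdb hκpos hb0 hdb0 ht0.le
    _ ≤ exp (∫ u in (0 : ℝ)..τ, u * κm u) := exp_le_exp.mpr hmono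

/-- Upper bound `b(t)/t ≤ exp(∫₀^τ u κ⁻(u) du)` for solutions of `b'' - κ⁻ b = 0`,
`b(0)=0`, `b'(0)=1`. -/
theorem stmt7 (κm : ℝ → ℝ) (τ : ℝ) (b db : ℝ → ℝ)
    (hκcont : Continuous κm) (hκpos : ∀ t, 0 ≤ κm t)
    (hτ : 0 < τ)
    (hb : ∀ t, HasDerivAt b (db t) t)
    (hdb : ∀ t, HasDerivAt db (κm t * b t) t)
    (hb0 : b 0 = 0) (hdb0 : db 0 = 1) :
    ∀ t ∈ Set.Ioc (0 : ℝ) τ,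
      b t / t ≤ Real.exp (∫ u in (0 : ℝ)..τ, u * κm u) :=
  stmt7_general κm τ b db hκcont hκpos hb hdb hb0 hdb0
end
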